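/- arXiv:0704.3286 — 3 statements merged into one kernel-verified Lean document; each statement's English description precedes it below -/
import Mathlib

section
/- Let G₁ and G₂ be nilpotent groups and ψ : G₁ → G₂ a group homomorphism. If the map induced by ψ on first integral group homology H₁(G₁;ℤ) → H₁(G₂;ℤ) (equivalently, the induced map on abelianizations G₁ᵃᵇ → G₂ᵃᵇ) is an isomorphism, and the map induced by ψ on second integral group homology H₂(G₁;ℤ) → H₂(G₂;ℤ) (group homology with trivial ℤ coefficients) is surjective, then ψ is an isomorphism of groups. -/
/-!
Group homology with trivial `ℤ` coefficients via Hopf's formula, using the canonical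
presentation of a group `G` as a quotient of the free group on (the underlying set of)
`G` itself: if `G = F/R` with `F` free, then `H₂(G;ℤ) ≅ (R ⊓ [F,F]) / [F,R]`, and
`H₁(G;ℤ) ≅ Gᵃᵇ`.  Both identifications are natural in `G`, so a homomorphism
`ψ : G₁ →* G₂` induces `Abelianization.map ψ` on `H₁` and, on `H₂`, the map obtained
from `FreeGroup.map ψ` after quotienting by `[F,R]` and restricting to the Hopf
subgroup `(R ⊓ [F,F]) / [F,R]`.
-/

/-- The canonical surjection from the free group on the underlying set of `G` onto `G`. -/
def freeProj (G : Type*) [Group G] : FreeGroup G →* G := FreeGroup.lift id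

/-- The relation subgroup `R = ker (freeProj G)` of the canonical presentation of `G`. -/
def relSubgroup (G : Type*) [Group G] : Subgroup (FreeGroup G) := (freeProj G).ker

instance (G : Type*) [Group G] : (relSubgroup G).Normal := (freeProj G).normal_ker

/-- The subgroup `[F, R]` of the free group `F` on the underlying set of `G`. -/
def commRel (G : Type*) [Group G] : Subgroup (FreeGroup G) :=
  ⁅(⊤ : Subgroup (FreeGroup G)), relSubgroup G⁆

instance (G : Type*) [Group G] : (commRel G).Normal :=
  Subgroup.commutator_normal ⊤ (relSubgroup G)

/-- Hopf's description of `H₂(G;ℤ)`: the subgroup `(R ⊓ [F,F]) / [F,R]` of `F / [F,R]`. -/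
def hopfH2 (G : Type*) [Group G] : Subgroup (FreeGroup G ⧸ commRel G) :=
  (relSubgroup G ⊓ commutator (FreeGroup G)).map (QuotientGroup.mk' (commRel G))

theorem freeProj_naturality {G₁ G₂ : Type*} [Group G₁] [Group G₂] (ψ : G₁ →* G₂) :
    (freeProj G₂).comp (FreeGroup.map ψ) = ψ.comp (freeProj G₁) :=
  FreeGroup.ext_hom _ _ fun a => by simp [freeProj]

theorem relSubgroup_map_le {G₁ G₂ : Type*} [Group G₁] [Group G₂] (ψ : G₁ →* G₂) :
    (relSubgroup G₁).map (FreeGroup.map ψ) ≤ relSubgroup G₂ := by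
  rintro x ⟨y, hy, rfl⟩
  have : freeProj G₂ (FreeGroup.map ψ y) = ψ (freeProj G₁ y) :=
    DFunLike.congr_fun (freeProj_naturality ψ) y
  simp only [relSubgroup, MonoidHom.mem_ker] at hy ⊢
  rw [this, hy, map_one]

theorem commRel_map_le {G₁ G₂ : Type*} [Group G₁] [Group G₂] (ψ : G₁ →* G₂) :
    (commRel G₁).map (FreeGroup.map ψ) ≤ commRel G₂ := by
  rw [commRel, Subgroup.map_commutator]
  exact Subgroup.commutator_mono le_top (relSubgroup_map_le ψ)

/-- The map induced by `ψ : G₁ →* G₂` on `F / [F,R]`; by Hopf's formula, its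
restriction to `hopfH2 G₁` is the map `H₂(G₁;ℤ) → H₂(G₂;ℤ)` induced by `ψ` on second
group homology with trivial `ℤ` coefficients. -/
def hopfMap {G₁ G₂ : Type*} [Group G₁] [Group G₂] (ψ : G₁ →* G₂) :
    (FreeGroup G₁ ⧸ commRel G₁) →* (FreeGroup G₂ ⧸ commRel G₂) :=
  QuotientGroup.map _ _ (FreeGroup.map ψ)
    (Subgroup.map_le_iff_le_comap.mp (commRel_map_le ψ))

/-!
Surjectivity: `H₁`-surjectivity says `ψ(G₁)·[G₂,G₂] = G₂`, and in a nilpotent group a subgroup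
supplementing the commutator subgroup is the whole group, because modulo `γₖ₊₁` the term `γₖ`
is central.

Injectivity: show by induction on `k` that `ψ g ∈ γₖ G₂` forces `g ∈ γₖ G₁`. Write
`πᵢ : Fᵢ → Gᵢ` for the free presentations, `φ : F₁ → F₂` for the lift of `ψ`, and
`Kᵢ = πᵢ⁻¹(γₖ Gᵢ)`, so that `πᵢ [Kᵢ, Fᵢ] = γₖ₊₁ Gᵢ`. Lift `g` to `x ∈ [F₁,F₁]` and `ψ g` to
`c ∈ γₖ₊₁ F₂`; then `φ x c⁻¹` is a relator in `[F₂,F₂]`, and `H₂`-surjectivity corrects `x` by a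
relator `y` with `φ (y⁻¹x) ∈ [K₂, F₂]`. A section `β` of `φ` satisfies `βφ ≡ id` modulo `K₁` by
the induction hypothesis, hence modulo `[K₁, F₁]` on commutators, so `y⁻¹x ∈ [K₁, F₁]` and
`g = π₁(y⁻¹x) ∈ γₖ₊₁ G₁`.
-/

open scoped commutatorElement
open Subgroup

section GroupTheory

variable {G H : Type*} [Group G] [Group H]

theorem lowerCentralSeries_le_comap (f : G →* H) (k : ℕ) :
    (⊤ : Subgroup G).lowerCentralSeries k ≤ ((⊤ : Subgroup H).lowerCentralSeries k).comap f := by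
  rw [← map_le_iff_le_comap, map_lowerCentralSeries]
  exact lowerCentralSeries_mono k le_top

theorem map_lowerCentralSeries_of_surjective {f : G →* H} (hf : Function.Surjective f) (k : ℕ) :
    ((⊤ : Subgroup G).lowerCentralSeries k).map f = (⊤ : Subgroup H).lowerCentralSeries k := by
  rw [map_lowerCentralSeries, map_top_of_surjective f hf]

theorem mk_mem_center_of_commutator_le {S N : Subgroup G} [N.Normal] (hSN : ⁅S, ⊤⁆ ≤ N) {s : G}
    (hs : s ∈ S) : (s : G ⧸ N) ∈ center (G ⧸ N) := by
  refine mem_center_iff.mpr fun g ↦ ?_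
  induction g using QuotientGroup.induction_on with | H g => ?_
  have h : ((⁅s, g⁆ : G) : G ⧸ N) = 1 :=
    (QuotientGroup.eq_one_iff _).mpr (hSN (commutator_mem_commutator hs (mem_top g)))
  rw [← QuotientGroup.mk'_apply, map_commutatorElement, commutatorElement_eq_one_iff_mul_comm] at h
  exact h.symm

theorem eqOn_commutator_of_inv_mul_mem_center {Q : Type*} [Group Q] (α α' : G →* Q)
    (h : ∀ w, (α' w)⁻¹ * α w ∈ center Q) {w : G} (hw : w ∈ commutator G) : α w = α' w := by
  let δ : G →* center Q :=
    { toFun := fun w ↦ ⟨(α' w)⁻¹ * α w, h w⟩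
      map_one' := by ext; simp
      map_mul' := fun a b ↦ by
        have hc := mem_center_iff.mp (h a) (α' b)⁻¹
        ext
        simp only [map_mul, mul_inv_rev, Subgroup.coe_mul]
        rw [show (α' b)⁻¹ * (α' a)⁻¹ * (α a * α b) = (α' b)⁻¹ * ((α' a)⁻¹ * α a) * α b by group,
          hc]
        group }
  have hδ : commutator G ≤ δ.ker := by
    rw [_root_.commutator_def, commutator_le]
    intro a _ b _
    rw [MonoidHom.mem_ker, map_commutatorElement, commutatorElement_eq_one_iff_mul_comm]
    exact Subtype.ext (mem_center_iff.mp (h b) _)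
  have h1 : (α' w)⁻¹ * α w = 1 := congrArg Subtype.val (hδ hw)
  exact (inv_mul_eq_one.mp h1).symm

theorem commutator_le_of_sup_eq_top_of_le_center {K Z : Subgroup G} (h : K ⊔ Z = ⊤)
    (hZ : Z ≤ center G) : commutator G ≤ K := by
  have : K.Normal := normalizer_eq_top_iff.mp <| top_le_iff.mp <|
    h ▸ sup_le le_normalizer (hZ.trans (center_le_normalizer _))
  exact Normal.commutator_le_of_self_sup_commutative_eq_top h
    ⟨⟨fun a b ↦ Subtype.ext (mem_center_iff.mp (hZ b.2) a)⟩⟩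

theorem sup_lowerCentralSeries_eq_top {K : Subgroup G} (h : K ⊔ commutator G = ⊤) (k : ℕ) :
    K ⊔ (⊤ : Subgroup G).lowerCentralSeries k = ⊤ := by
  induction k with
  | zero => exact sup_top_eq K
  | succ k ih =>
    let N := (⊤ : Subgroup G).lowerCentralSeries (k + 1)
    have hN : Function.Surjective (QuotientGroup.mk' N) := QuotientGroup.mk'_surjective N
    have hcentral : ((⊤ : Subgroup G).lowerCentralSeries k).map (QuotientGroup.mk' N) ≤
        center (G ⧸ N) := by
      rintro _ ⟨s, hs, rfl⟩
      exact mk_mem_center_of_commutator_le le_rfl hs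
    have hsup : K.map (QuotientGroup.mk' N) ⊔
        ((⊤ : Subgroup G).lowerCentralSeries k).map (QuotientGroup.mk' N) = ⊤ := by
      rw [← Subgroup.map_sup, ih, map_top_of_surjective _ hN]
    have hab : K.map (QuotientGroup.mk' N) ⊔ commutator (G ⧸ N) = ⊤ := by
      rw [_root_.commutator_def, ← map_top_of_surjective _ hN, ← map_commutator,
        ← _root_.commutator_def, ← Subgroup.map_sup, h]
    have htop : K.map (QuotientGroup.mk' N) = ⊤ := by
      rwa [sup_eq_left.mpr (commutator_le_of_sup_eq_top_of_le_center hsup hcentral)] at hab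
    have hpull := comap_map_eq (QuotientGroup.mk' N) K
    rwa [htop, comap_top, QuotientGroup.ker_mk', eq_comm] at hpull

theorem eq_top_of_sup_commutator_eq_top [Group.IsNilpotent G] {K : Subgroup G}
    (h : K ⊔ commutator G = ⊤) : K = ⊤ := by
  obtain ⟨n, hn⟩ := Subgroup.nilpotent_iff_lowerCentralSeries.mp ‹_›
  simpa [hn] using sup_lowerCentralSeries_eq_top h n

theorem range_sup_commutator_eq_top {f : G →* H}
    (hf : Function.Surjective (Abelianization.map f)) : f.range ⊔ commutator H = ⊤ := by
  have hcomp : Abelianization.of.comp f = (Abelianization.map f).comp Abelianization.of :=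
    MonoidHom.ext fun x ↦ (Abelianization.map_of f x).symm
  rw [← Abelianization.ker_of, ← comap_map_eq, MonoidHom.range_eq_map, map_map, hcomp, ← map_map,
    map_top_of_surjective _ QuotientGroup.mk_surjective, map_top_of_surjective _ hf, comap_top]

theorem mem_commutator_of_abelianizationMap_injective {f : G →* H}
    (hf : Function.Injective (Abelianization.map f)) {g : G} (hg : f g ∈ commutator H) :
    g ∈ commutator G := by
  rw [← Abelianization.ker_of, MonoidHom.mem_ker] at hg ⊢
  exact hf (by rw [Abelianization.map_of, hg, map_one])

theorem mem_commutator_top_of_map_mem (α : G →* H) (β : H →* G) {K₁ : Subgroup G} [K₁.Normal]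
    {K₂ : Subgroup H} (hβ : K₂ ≤ K₁.comap β) (hβα : ∀ w, w⁻¹ * β (α w) ∈ K₁) {z : G}
    (hz : z ∈ commutator G) (hαz : α z ∈ ⁅K₂, (⊤ : Subgroup H)⁆) :
    z ∈ ⁅K₁, (⊤ : Subgroup G)⁆ := by
  have hβαz : β (α z) ∈ ⁅K₁, (⊤ : Subgroup G)⁆ := by
    have hmap : map β ⁅K₂, ⊤⁆ ≤ ⁅K₁, ⊤⁆ := by
      rw [map_commutator]
      exact commutator_mono (map_le_iff_le_comap.mpr hβ) le_top
    exact hmap (mem_map_of_mem β hαz)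
  have hcongr := eqOn_commutator_of_inv_mul_mem_center
    ((QuotientGroup.mk' ⁅K₁, ⊤⁆).comp (β.comp α)) (QuotientGroup.mk' ⁅K₁, ⊤⁆)
    (fun w ↦ by
      simpa only [MonoidHom.comp_apply, QuotientGroup.mk'_apply, QuotientGroup.mk_mul,
        QuotientGroup.mk_inv] using mk_mem_center_of_commutator_le le_rfl (hβα w)) hz
  rw [← QuotientGroup.eq_one_iff] at hβαz ⊢
  simpa [hβαz] using hcongr.symm

end GroupTheory

section FreePresentation

variable {G₁ G₂ : Type*} [Group G₁] [Group G₂] {ψ : G₁ →* G₂}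

theorem freeProj_surjective (G : Type*) [Group G] : Function.Surjective (freeProj G) :=
  fun g ↦ ⟨FreeGroup.of g, by simp [freeProj]⟩

theorem freeProj_map (w : FreeGroup G₁) :
    freeProj G₂ (FreeGroup.map ψ w) = ψ (freeProj G₁ w) :=
  DFunLike.congr_fun (freeProj_naturality ψ) w

theorem freeProj_map_surjInv (hψ : Function.Surjective ψ) (w : FreeGroup G₂) :
    ψ (freeProj G₁ (FreeGroup.map (Function.surjInv hψ) w)) = freeProj G₂ w := by
  have hcomp : ψ.comp ((freeProj G₁).comp (FreeGroup.map (Function.surjInv hψ))) = freeProj G₂ :=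
    FreeGroup.ext_hom _ _ fun a ↦ by simp [freeProj, Function.surjInv_eq hψ]
  exact DFunLike.congr_fun hcomp w

theorem exists_map_inv_mul_mem_commRel (h2 : hopfH2 G₂ ≤ (hopfH2 G₁).map (hopfMap ψ))
    {w : FreeGroup G₂} (hw : w ∈ relSubgroup G₂ ⊓ commutator (FreeGroup G₂)) :
    ∃ y ∈ relSubgroup G₁ ⊓ commutator (FreeGroup G₁), (FreeGroup.map ψ y)⁻¹ * w ∈ commRel G₂ := by
  obtain ⟨_, ⟨y, hy, rfl⟩, hyw⟩ := h2 (mem_map_of_mem _ hw)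
  exact ⟨y, hy, QuotientGroup.eq.mp hyw⟩

variable {k : ℕ}

theorem freeProj_mem_lowerCentralSeries_succ (hψ : Function.Surjective ψ)
    (ih : ((⊤ : Subgroup G₂).lowerCentralSeries k).comap ψ ≤ (⊤ : Subgroup G₁).lowerCentralSeries k)
    {z : FreeGroup G₁} (hz : z ∈ commutator (FreeGroup G₁))
    (hφz : FreeGroup.map ψ z ∈
      ⁅((⊤ : Subgroup G₂).lowerCentralSeries k).comap (freeProj G₂), (⊤ : Subgroup _)⁆) :
    freeProj G₁ z ∈ (⊤ : Subgroup G₁).lowerCentralSeries (k + 1) := by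
  have hβ : ((⊤ : Subgroup G₂).lowerCentralSeries k).comap (freeProj G₂) ≤
      (((⊤ : Subgroup G₁).lowerCentralSeries k).comap (freeProj G₁)).comap
        (FreeGroup.map (Function.surjInv hψ)) :=
    fun s hs ↦ ih (by rwa [mem_comap, freeProj_map_surjInv])
  have hβφ (w : FreeGroup G₁) : w⁻¹ * FreeGroup.map (Function.surjInv hψ) (FreeGroup.map ψ w) ∈
      ((⊤ : Subgroup G₁).lowerCentralSeries k).comap (freeProj G₁) := by
    refine ih ?_
    rw [mem_comap, map_mul, map_inv, map_mul, map_inv, freeProj_map_surjInv, freeProj_map,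
      inv_mul_cancel]
    exact one_mem _
  have hmap := mem_map_of_mem (freeProj G₁) (mem_commutator_top_of_map_mem _ _ hβ hβφ hz hφz)
  rwa [map_commutator, map_comap_eq_self_of_surjective (freeProj_surjective G₁),
    map_top_of_surjective _ (freeProj_surjective G₁)] at hmap

theorem mem_lowerCentralSeries_succ_of_map_mem (hψ : Function.Surjective ψ)
    (h2 : hopfH2 G₂ ≤ (hopfH2 G₁).map (hopfMap ψ))
    (ih : ((⊤ : Subgroup G₂).lowerCentralSeries k).comap ψ ≤ (⊤ : Subgroup G₁).lowerCentralSeries k)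
    {g : G₁} (hg : g ∈ commutator G₁) (hψg : ψ g ∈ (⊤ : Subgroup G₂).lowerCentralSeries (k + 1)) :
    g ∈ (⊤ : Subgroup G₁).lowerCentralSeries (k + 1) := by
  obtain ⟨x, hx, rfl⟩ : g ∈ (commutator (FreeGroup G₁)).map (freeProj G₁) := by
    rwa [← top_lowerCentralSeries_one,
      map_lowerCentralSeries_of_surjective (freeProj_surjective G₁)]
  obtain ⟨c, hc, hcx⟩ : ψ (freeProj G₁ x) ∈
      ((⊤ : Subgroup (FreeGroup G₂)).lowerCentralSeries (k + 1)).map (freeProj G₂) := by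
    rwa [map_lowerCentralSeries_of_surjective (freeProj_surjective G₂)]
  set φ := FreeGroup.map ψ
  have hw : φ x * c⁻¹ ∈ relSubgroup G₂ ⊓ commutator (FreeGroup G₂) := by
    refine mem_inf.mpr ⟨?_, mul_mem (lowerCentralSeries_le_comap φ 1 hx)
      (inv_mem ((⊤ : Subgroup _).lowerCentralSeries_antitone (Nat.le_add_left 1 k) hc))⟩
    rw [relSubgroup, MonoidHom.mem_ker, map_mul, map_inv, hcx, freeProj_map, mul_inv_cancel]
  obtain ⟨y, ⟨hyR, hyF⟩, hyw⟩ := exists_map_inv_mul_mem_commRel h2 hw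
  have hφ : φ (y⁻¹ * x) ∈
      ⁅((⊤ : Subgroup G₂).lowerCentralSeries k).comap (freeProj G₂), (⊤ : Subgroup _)⁆ := by
    rw [show φ (y⁻¹ * x) = (φ y)⁻¹ * (φ x * c⁻¹) * c by rw [map_mul, map_inv]; group]
    refine mul_mem ?_ (commutator_mono (lowerCentralSeries_le_comap (freeProj G₂) k) le_top hc)
    rw [commRel, commutator_comm] at hyw
    exact commutator_mono ((freeProj G₂).ker_le_comap _) le_top hyw
  simpa [MonoidHom.mem_ker.mp hyR] using
    freeProj_mem_lowerCentralSeries_succ hψ ih (mul_mem (inv_mem hyF) hx) hφ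

theorem comap_lowerCentralSeries_le (hψ : Function.Surjective ψ)
    (h1 : Function.Injective (Abelianization.map ψ))
    (h2 : hopfH2 G₂ ≤ (hopfH2 G₁).map (hopfMap ψ)) (k : ℕ) :
    ((⊤ : Subgroup G₂).lowerCentralSeries k).comap ψ ≤ (⊤ : Subgroup G₁).lowerCentralSeries k := by
  induction k with
  | zero => exact le_top
  | succ k ih =>
    intro g hg
    have hg₁ : g ∈ commutator G₁ := mem_commutator_of_abelianizationMap_injective h1
      ((⊤ : Subgroup G₂).lowerCentralSeries_antitone (Nat.le_add_left 1 k) hg)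
    exact mem_lowerCentralSeries_succ_of_map_mem hψ h2 ih hg₁ hg

end FreePresentation

/-- Stallings: let `G₁`, `G₂` be nilpotent groups and `ψ : G₁ →* G₂` a
homomorphism.  If the map induced by `ψ` on `H₁(-;ℤ)` (equivalently, on
abelianizations) is an isomorphism, and the map induced by `ψ` on `H₂(-;ℤ)` is
surjective (i.e. the image of `hopfH2 G₁` under `hopfMap ψ` is all of `hopfH2 G₂`),
then `ψ` is an isomorphism of groups. -/
theorem stallings {G₁ G₂ : Type*} [Group G₁] [Group G₂]
    [Group.IsNilpotent G₁] [Group.IsNilpotent G₂] (ψ : G₁ →* G₂)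
    (h1 : Function.Bijective (Abelianization.map ψ))
    (h2 : hopfH2 G₂ ≤ (hopfH2 G₁).map (hopfMap ψ)) :
    Function.Bijective ψ := by
  have hψ : Function.Surjective ψ :=
    MonoidHom.range_eq_top.mp (eq_top_of_sup_commutator_eq_top (range_sup_commutator_eq_top h1.2))
  obtain ⟨n, hn⟩ := Subgroup.nilpotent_iff_lowerCentralSeries.mp ‹Group.IsNilpotent G₁›
  have hker : ψ.ker ≤ (⊤ : Subgroup G₁).lowerCentralSeries n :=
    (ker_le_comap ψ _).trans (comap_lowerCentralSeries_le hψ h1.1 h2 n)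
  rw [hn, le_bot_iff, MonoidHom.ker_eq_bot_iff] at hker
  exact ⟨hker, hψ⟩
end

section
/- The free colored Milnor group CMF is nilpotent; that is, for any finite index type ι and any r : ι → ℕ, the quotient F/X of the free group F on the generating set Σ_{i : ι} Fin (r i) by the subgroup X is a nilpotent group. -/
/-!
For each color `i`, the normal closure `Nᵢ` of the generators of color `i` is abelian, being
generated by the pairwise commuting conjugates of those generators, and the `Nᵢ` together
generate `CMF`. A group generated by finitely many normal abelian subgroups `N₁, …, N_c` is
nilpotent of class at most `c`: the `n`-th term of the lower central series lies in the join of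
the intersections of `n + 1` distinct `Nᵢ`, since the commutator of such an intersection with
`Nᵢ` lies either in `⁅Nᵢ, Nᵢ⁆ = 1` or in an intersection of `n + 2` of them.
-/

open scoped commutatorElement in
/-- The Milnor relations: the normal closure in the free group on generators
`x_{ij}` (indexed by `(i, j) : Σ i : ι, Fin (r i)`, where `i` is the color) of all
commutators of two conjugates of generators of the same color. -/
def milnorRels (ι : Type*) (r : ι → ℕ) : Subgroup (FreeGroup (Σ i : ι, Fin (r i))) :=
  Subgroup.normalClosure
    {w | ∃ (i : ι) (j k : Fin (r i)) (g₁ g₂ : FreeGroup (Σ i : ι, Fin (r i))),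
      w = ⁅g₁ * FreeGroup.of ⟨i, j⟩ * g₁⁻¹, g₂ * FreeGroup.of ⟨i, k⟩ * g₂⁻¹⁆}

instance (ι : Type*) (r : ι → ℕ) : (milnorRels ι r).Normal :=
  Subgroup.normalClosure_normal

/-- The free colored Milnor group `CMF = F/X`. -/
abbrev CMF (ι : Type*) (r : ι → ℕ) : Type _ :=
  FreeGroup (Σ i : ι, Fin (r i)) ⧸ milnorRels ι r

/-- The class of the generator `x_{ij}` in `CMF`. -/
def xg (ι : Type*) (r : ι → ℕ) (i : ι) (j : Fin (r i)) : CMF ι r :=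
  QuotientGroup.mk (FreeGroup.of ⟨i, j⟩)

open scoped commutatorElement

namespace Subgroup

variable {G : Type*} [Group G]

theorem commutator_le_iff_le_comap_centralizer {H K M : Subgroup G} [M.Normal] :
    ⁅H, K⁆ ≤ M ↔ H ≤ (centralizer (K.map (QuotientGroup.mk' M) : Set (G ⧸ M))).comap
      (QuotientGroup.mk' M) := by
  rw [← map_le_iff_le_comap, ← commutator_eq_bot_iff_le_centralizer, ← map_commutator,
    map_eq_bot_iff, QuotientGroup.ker_mk']

theorem iSup_commutator_le_iff {κ : Sort*} {H : κ → Subgroup G} {K M : Subgroup G} [M.Normal] :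
    ⁅⨆ i, H i, K⁆ ≤ M ↔ ∀ i, ⁅H i, K⁆ ≤ M := by
  simp only [commutator_le_iff_le_comap_centralizer, iSup_le_iff]

theorem commutator_iSup_le_iff {κ : Sort*} {H : κ → Subgroup G} {K M : Subgroup G} [M.Normal] :
    ⁅K, ⨆ i, H i⁆ ≤ M ↔ ∀ i, ⁅K, H i⁆ ≤ M := by
  simp only [commutator_comm K, iSup_commutator_le_iff]

variable {ι : Type*} (N : ι → Subgroup G)

def iSupInfOfCard (n : ℕ) : Subgroup G :=
  ⨆ (S : Finset ι) (_ : S.card = n), ⨅ i ∈ S, N i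

theorem biInf_le_iSupInfOfCard {S : Finset ι} {n : ℕ} (hS : S.card = n) :
    ⨅ i ∈ S, N i ≤ iSupInfOfCard N n :=
  le_iSup₂_of_le (f := fun (T : Finset ι) (_ : T.card = n) => ⨅ i ∈ T, N i) S hS le_rfl

theorem iSupInfOfCard_eq_bot_of_card_lt [Fintype ι] {n : ℕ} (hn : Fintype.card ι < n) :
    iSupInfOfCard N n = ⊥ :=
  eq_bot_iff.mpr <| iSup₂_le fun S hS => absurd (Finset.card_le_univ S) (by omega)

instance [∀ i, (N i).Normal] (S : Finset ι) : (⨅ i ∈ S, N i).Normal :=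
  normal_iInf_normal fun _ => normal_iInf_normal fun _ => inferInstance

instance [∀ i, (N i).Normal] (n : ℕ) : (iSupInfOfCard N n).Normal := by
  unfold iSupInfOfCard
  infer_instance

variable {N} [∀ i, (N i).Normal] [∀ i, IsMulCommutative (N i)]

theorem commutator_iSupInfOfCard_le (n : ℕ) (i : ι) :
    ⁅iSupInfOfCard N n, N i⁆ ≤ iSupInfOfCard N (n + 1) := by
  classical
  rw [iSupInfOfCard, iSup_commutator_le_iff]
  intro S
  rw [iSup_commutator_le_iff]
  intro hS
  by_cases hi : i ∈ S
  · have hSi : ⨅ j ∈ S, N j ≤ centralizer (N i) := (biInf_le N hi).trans (le_centralizer (N i))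
    exact (commutator_eq_bot_iff_le_centralizer.mpr hSi).le.trans bot_le
  · calc ⁅⨅ j ∈ S, N j, N i⁆ ≤ N i ⊓ ⨅ j ∈ S, N j :=
          (commutator_le_inf _ _).trans (inf_comm _ _).le
      _ = ⨅ j ∈ insert i S, N j := (Finset.iInf_insert i S N).symm
      _ ≤ iSupInfOfCard N (n + 1) :=
        biInf_le_iSupInfOfCard N (by rw [Finset.card_insert_of_notMem hi, hS])

theorem lowerCentralSeries_le_iSupInfOfCard {S : Subgroup G} (hS : S ≤ ⨆ i, N i) :
    ∀ n, S.lowerCentralSeries n ≤ iSupInfOfCard N (n + 1)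
  | 0 => hS.trans <| iSup_le fun i => by
      simpa using biInf_le_iSupInfOfCard N (Finset.card_singleton i)
  | n + 1 => (commutator_mono (lowerCentralSeries_le_iSupInfOfCard hS n) hS).trans <|
      commutator_iSup_le_iff.mpr (commutator_iSupInfOfCard_le (n + 1))

theorem _root_.Group.isNilpotent_of_iSup_eq_top [Finite ι] (htop : ⨆ i, N i = ⊤) :
    Group.IsNilpotent G := by
  have := Fintype.ofFinite ι
  refine nilpotent_iff_lowerCentralSeries.mpr ⟨Fintype.card ι, le_bot_iff.mp ?_⟩
  calc (⊤ : Subgroup G).lowerCentralSeries (Fintype.card ι)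
      ≤ iSupInfOfCard N (Fintype.card ι + 1) := lowerCentralSeries_le_iSupInfOfCard htop.ge _
    _ = ⊥ := iSupInfOfCard_eq_bot_of_card_lt N (Nat.lt_succ_self _)

end Subgroup

namespace CMF

variable (ι : Type*) (r : ι → ℕ)

theorem commutator_conj_xg_eq_one (i : ι) (j k : Fin (r i)) (a b : CMF ι r) :
    ⁅a * xg ι r i j * a⁻¹, b * xg ι r i k * b⁻¹⁆ = 1 := by
  obtain ⟨g₁, rfl⟩ := QuotientGroup.mk_surjective a
  obtain ⟨g₂, rfl⟩ := QuotientGroup.mk_surjective b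
  exact (QuotientGroup.eq_one_iff _).mpr (Subgroup.subset_normalClosure ⟨i, j, k, g₁, g₂, rfl⟩)

def colorSubgroup (i : ι) : Subgroup (CMF ι r) :=
  Subgroup.normalClosure (Set.range (xg ι r i))

instance (i : ι) : (colorSubgroup ι r i).Normal :=
  Subgroup.normalClosure_normal

instance (i : ι) : IsMulCommutative (colorSubgroup ι r i) := by
  refine Subgroup.isMulCommutative_closure ?_
  simp only [Group.mem_conjugatesOfSet_iff, Set.exists_range_iff, isConj_iff]
  rintro _ ⟨j, a, rfl⟩ _ ⟨k, b, rfl⟩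
  exact commutatorElement_eq_one_iff_mul_comm.mp (commutator_conj_xg_eq_one ι r i j k a b)

theorem iSup_colorSubgroup : ⨆ i, colorSubgroup ι r i = ⊤ := by
  rw [eq_top_iff, ← MonoidHom.range_eq_top.mpr (QuotientGroup.mk'_surjective (milnorRels ι r)),
    MonoidHom.range_eq_map, ← FreeGroup.closure_range_of, MonoidHom.map_closure,
    Subgroup.closure_le]
  rintro _ ⟨_, ⟨⟨i, j⟩, rfl⟩, rfl⟩
  exact Subgroup.mem_iSup_of_mem i (Subgroup.subset_normalClosure ⟨j, rfl⟩)

end CMF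

/-- the free colored Milnor group is nilpotent. -/
theorem cmf_isNilpotent (ι : Type*) [Fintype ι] (r : ι → ℕ) :
    Group.IsNilpotent (CMF ι r) :=
  Group.isNilpotent_of_iSup_eq_top (CMF.iSup_colorSubgroup ι r)
end

section
/- In the free Milnor group on three generators, the triple commutator of the three generators is nontrivial: let F be the free group on generators x₁, x₂, x₃, and let X be the normal closure in F of all commutators [g₁ x_i g₁⁻¹, g₂ x_i g₂⁻¹] for i ∈ {1,2,3} and g₁, g₂ ∈ F. Then the image of [x₁, [x₂, x₃]] in the quotient group MF := F/X is not the identity element. -/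
open scoped commutatorElement

/-- The Milnor relations in the free group on three generators `x₁, x₂, x₃`
(indexed by `Fin 3`): the normal closure of all commutators of two conjugates
of the same generator. -/
def milnorRels3 : Subgroup (FreeGroup (Fin 3)) :=
  Subgroup.normalClosure
    {w | ∃ (i : Fin 3) (g₁ g₂ : FreeGroup (Fin 3)),
      w = ⁅g₁ * FreeGroup.of i * g₁⁻¹, g₂ * FreeGroup.of i * g₂⁻¹⁆}

instance : milnorRels3.Normal := Subgroup.normalClosure_normal

/-- The free Milnor group on three generators `MF = F/X`. -/
abbrev MF3 : Type := FreeGroup (Fin 3) ⧸ milnorRels3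

/-!
Send `xᵢ` to the elementary matrix `1 + E_{i,i+1}` in the group of upper unitriangular
`4 × 4` matrices. A conjugate `u (1 + E_{i,i+1}) u⁻¹ = 1 + (u eᵢ)(e_{i+1}ᵀ u⁻¹)` has a nilpotent
part supported in rows `≤ i` and columns `≥ i + 1`, and any two such parts multiply to zero,
so conjugates of the same generator commute and the map factors through `MF3`. There
`[x₁, [x₂, x₃]]` goes to `1 + E_{03} ≠ 1`.
-/

/-- An upper unitriangular `4 × 4` matrix over `R`, stored by its entries above the diagonal. -/
@[ext]
structure UT4 (R : Type*) where
  m01 : R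
  m02 : R
  m03 : R
  m12 : R
  m13 : R
  m23 : R

namespace UT4

variable {R : Type*} [CommRing R]

@[simps]
instance : One (UT4 R) := ⟨⟨0, 0, 0, 0, 0, 0⟩⟩

@[simps]
instance : Mul (UT4 R) :=
  ⟨fun x y => ⟨x.m01 + y.m01, x.m02 + y.m02 + x.m01 * y.m12,
    x.m03 + y.m03 + x.m01 * y.m13 + x.m02 * y.m23, x.m12 + y.m12,
    x.m13 + y.m13 + x.m12 * y.m23, x.m23 + y.m23⟩⟩

-- `(1 + N)⁻¹ = 1 - N + N² - N³`
@[simps]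
instance : Inv (UT4 R) :=
  ⟨fun x => ⟨-x.m01, -x.m02 + x.m01 * x.m12,
    -x.m03 + x.m01 * x.m13 + x.m02 * x.m23 - x.m01 * x.m12 * x.m23, -x.m12,
    -x.m13 + x.m12 * x.m23, -x.m23⟩⟩

instance : Group (UT4 R) where
  mul_assoc x y z := by ext <;> simp <;> ring
  one_mul x := by ext <;> simp
  mul_one x := by ext <;> simp
  inv_mul_cancel x := by ext <;> simp; ring

variable (R) in
def gen : Fin 3 → UT4 R
  | 0 => ⟨1, 0, 0, 0, 0, 0⟩
  | 1 => ⟨0, 0, 0, 1, 0, 0⟩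
  | 2 => ⟨0, 0, 0, 0, 0, 1⟩

lemma commute_conj_gen (i : Fin 3) (u v : UT4 R) :
    Commute (u * gen R i * u⁻¹) (v * gen R i * v⁻¹) := by
  fin_cases i <;> ext <;> simp [gen] <;> ring

lemma commutatorElement_gen_gen_gen :
    ⁅gen R 0, ⁅gen R 1, gen R 2⁆⁆ = ⟨0, 0, 1, 0, 0, 0⟩ := by
  simp only [commutatorElement_def]
  ext <;> simp [gen]

lemma commutatorElement_gen_gen_gen_ne_one [Nontrivial R] :
    ⁅gen R 0, ⁅gen R 1, gen R 2⁆⁆ ≠ 1 := by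
  rw [commutatorElement_gen_gen_gen]
  exact fun h => one_ne_zero (congrArg m03 h)

end UT4

lemma milnorRels3_le_ker_lift {G : Type*} [Group G] (f : Fin 3 → G)
    (hf : ∀ i (u v : G), Commute (u * f i * u⁻¹) (v * f i * v⁻¹)) :
    milnorRels3 ≤ (FreeGroup.lift f).ker := by
  refine Subgroup.normalClosure_le_normal ?_
  rintro _ ⟨i, g₁, g₂, rfl⟩
  simpa [commutatorElement_eq_one_iff_commute] using
    hf i (FreeGroup.lift f g₁) (FreeGroup.lift f g₂)

/-- in the free Milnor group on three generators, the triple commutator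
`[x₁, [x₂, x₃]]` is nontrivial. -/
theorem triple_commutator_ne_one :
    (QuotientGroup.mk ⁅FreeGroup.of (0 : Fin 3), ⁅FreeGroup.of (1 : Fin 3), FreeGroup.of (2 : Fin 3)⁆⁆ : MF3) ≠ 1 := by
  intro h
  have h_ker : _ ∈ (FreeGroup.lift (UT4.gen ℤ)).ker :=
    milnorRels3_le_ker_lift _ UT4.commute_conj_gen ((QuotientGroup.eq_one_iff _).mp h)
  rw [MonoidHom.mem_ker] at h_ker
  simp only [map_commutatorElement, FreeGroup.lift_apply_of] at h_ker
  exact UT4.commutatorElement_gen_gen_gen_ne_one h_ker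
end
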